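/- arXiv:1709.09866 — 2 statements merged into one kernel-verified Lean document; each statement's English description precedes it below -/
import Mathlib

section
/- Let f : 𝕋^d → ℝ be smooth with C_f = max(‖∇f‖_∞, ‖∇²f‖_∞, ‖∇³f‖_∞), let V, V_ε be C¹ on 𝕋^d, β > 0, ε > 0. Then for all (q,p): |L_ε f_ε(q,p) − Lf(q)| ≤ C_f‖∇V − ∇V_ε‖_∞ + ε C_f(2|p|³ + ‖∇V_ε‖_∞^{3/2}), where f_ε, L_ε, L are as in the perturbed test function construction. -/
open scoped RealInnerProductSpace

abbrev Ed (d : ℕ) := EuclideanSpace ℝ (Fin d)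

def ZdPeriodic {d : ℕ} (f : Ed d → ℝ) : Prop :=
  ∀ (q : Ed d) (m : Fin d → ℤ),
    f (q + (EuclideanSpace.equiv (Fin d) ℝ).symm (fun i => (m i : ℝ))) = f q

/-- Hessian (second derivative) of `f` at `q` applied to `(u, v)`. -/
noncomputable def Hess {d : ℕ} (f : Ed d → ℝ) (q u v : Ed d) : ℝ :=
  fderiv ℝ (fun x => fderiv ℝ f x v) q u

noncomputable def lapl {d : ℕ} (g : Ed d → ℝ) (p : Ed d) : ℝ :=
  ∑ i : Fin d,
    fderiv ℝ (fun x => fderiv ℝ g x (EuclideanSpace.single i (1 : ℝ))) p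
      (EuclideanSpace.single i (1 : ℝ))

/-- The Langevin generator with potential `Vε`, inverse temperature `β` and scale `ε`. -/
noncomputable def Leps {d : ℕ} (ε β : ℝ) (Vε : Ed d → ℝ)
    (g : Ed d → Ed d → ℝ) (q p : Ed d) : ℝ :=
  ε⁻¹ ^ 2 * (β⁻¹ * lapl (g q) p - ⟪p, gradient (g q) p⟫)
    + ε⁻¹ * (⟪p, gradient (fun q' => g q' p) q⟫ - ⟪gradient Vε q, gradient (g q) p⟫)

/-- The overdamped generator. -/
noncomputable def Lov {d : ℕ} (β : ℝ) (V : Ed d → ℝ) (f : Ed d → ℝ) (q : Ed d) : ℝ :=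
  β⁻¹ * lapl f q - ⟪gradient V q, gradient f q⟫

/-- The perturbed test function `f_ε`. -/
noncomputable def ftest {d : ℕ} (ε : ℝ) (f : Ed d → ℝ) (q p : Ed d) : ℝ :=
  f q + ε * ⟪p, gradient f q⟫ + ε ^ 2 / 2 * Hess f q p p

/-! ### Auxiliary lemmas -/

noncomputable instance triCLMNormedAddCommGroup_aux (d : ℕ) :
    NormedAddCommGroup (Ed d →L[ℝ] Ed d →L[ℝ] Ed d →L[ℝ] ℝ) :=
  ContinuousLinearMap.toNormedAddCommGroup (𝕜 := ℝ) (𝕜₂ := ℝ) (E := Ed d)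
    (F := Ed d →L[ℝ] Ed d →L[ℝ] ℝ) (σ₁₂ := RingHom.id ℝ)

noncomputable instance triCLMNormedSpace_aux (d : ℕ) :
    NormedSpace ℝ (Ed d →L[ℝ] Ed d →L[ℝ] Ed d →L[ℝ] ℝ) :=
  ContinuousLinearMap.toNormedSpace (𝕜 := ℝ) (𝕜₂ := ℝ) (E := Ed d)
    (F := Ed d →L[ℝ] Ed d →L[ℝ] ℝ) (σ₁₂ := RingHom.id ℝ)


lemma mul_le_cube_add_aux (a b : ℝ) (ha : 0 ≤ a) (hb : 0 ≤ b) :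
    a * b ≤ a ^ 3 + b ^ ((3 : ℝ) / 2) := by
  have hs := Real.sqrt_nonneg b
  have hsq : Real.sqrt b ^ 2 = b := Real.sq_sqrt hb
  have hpow : b ^ ((3 : ℝ) / 2) = Real.sqrt b * b := by
    rw [show (3 : ℝ) / 2 = 1 / 2 + 1 by norm_num, Real.rpow_add' hb (by norm_num),
      Real.rpow_one, ← Real.sqrt_eq_rpow]
  rcases le_or_gt a (Real.sqrt b) with h | h
  · have : a * b ≤ Real.sqrt b * b := mul_le_mul_of_nonneg_right h hb
    nlinarith [pow_nonneg ha 3]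
  · have hapos : 0 < a := lt_of_le_of_lt hs h
    nlinarith [mul_nonneg (mul_nonneg hapos.le (sub_nonneg.2 h.le)) (add_nonneg hapos.le hs),
      mul_nonneg hs hb]

lemma bdd_of_periodic_aux {d : ℕ} {X : Type*} [NormedAddCommGroup X] (G : Ed d → X)
    (hG : Continuous G)
    (hper : ∀ (q : Ed d) (m : Fin d → ℤ),
      G (q + (EuclideanSpace.equiv (Fin d) ℝ).symm (fun i => (m i : ℝ))) = G q) :
    BddAbove (Set.range fun q => ‖G q‖) := by
  have hcomp : IsCompact (Metric.closedBall (0 : Ed d) (Real.sqrt d)) :=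
    isCompact_closedBall _ _
  have himage : BddAbove ((fun q => ‖G q‖) '' Metric.closedBall (0 : Ed d) (Real.sqrt d)) :=
    (hcomp.image hG.norm).bddAbove
  refine BddAbove.mono ?_ himage
  rintro r ⟨q, rfl⟩
  set m : Fin d → ℤ := fun i => -⌊q i⌋ with hm
  set q' : Ed d := q + (EuclideanSpace.equiv (Fin d) ℝ).symm (fun i => (m i : ℝ)) with hq'
  have hqi : ∀ i, q' i = q i - ⌊q i⌋ := by
    intro i
    simp [hq', hm, sub_eq_add_neg]
  refine ⟨q', ?_, ?_⟩
  · rw [Metric.mem_closedBall, dist_zero_right, EuclideanSpace.norm_eq]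
    apply Real.sqrt_le_sqrt
    calc (∑ i, ‖q' i‖ ^ 2) ≤ ∑ _i : Fin d, (1 : ℝ) := by
          apply Finset.sum_le_sum
          intro i _
          have h1 : (0:ℝ) ≤ q' i := by rw [hqi i]; exact sub_nonneg.2 (Int.floor_le _)
          have h2 : q' i ≤ 1 := by
            rw [hqi i]
            have := Int.lt_floor_add_one (q i)
            linarith
          rw [Real.norm_eq_abs, abs_of_nonneg h1]
          nlinarith
      _ = d := by simp
  · show ‖G q'‖ = ‖G q‖
    rw [hq', hper q m]

lemma fderiv_shift_aux {d : ℕ} {X : Type*} [NormedAddCommGroup X] [NormedSpace ℝ X]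
    {G : Ed d → X} (hG : Differentiable ℝ G) {c : Ed d} (h : ∀ x, G (x + c) = G x) (q : Ed d) :
    fderiv ℝ G (q + c) = fderiv ℝ G q := by
  have ht : HasFDerivAt (fun x : Ed d => x + c) (ContinuousLinearMap.id ℝ (Ed d)) q :=
    (hasFDerivAt_id q).add_const c
  have h1 : HasFDerivAt (fun x => G (x + c)) (fderiv ℝ G (q + c)) q := by
    exact (hG (q + c)).hasFDerivAt.comp q ht
  have h2 : HasFDerivAt G (fderiv ℝ G (q + c)) q := by
    have he : (fun x => G (x + c)) = G := funext h
    rwa [he] at h1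
  exact h2.fderiv.symm

lemma inner_grad_aux {d : ℕ} (g : Ed d → ℝ) (x v : Ed d) :
    ⟪v, gradient g x⟫ = fderiv ℝ g x v := by
  rw [real_inner_comm]; exact InnerProductSpace.toDual_symm_apply

lemma gradient_def_aux {d : ℕ} (g : Ed d → ℝ) (x : Ed d) :
    gradient g x = (InnerProductSpace.toDual ℝ (Ed d)).symm (fderiv ℝ g x) := rfl

lemma fderiv_apply_const_aux {d : ℕ} {G : Type*} [NormedAddCommGroup G] [NormedSpace ℝ G]
    {c : Ed d → (Ed d →L[ℝ] G)} {x : Ed d} (v : Ed d) (hc : DifferentiableAt ℝ c x) :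
    fderiv ℝ (fun y => c y v) x = (fderiv ℝ c x).flip v := by
  rw [fderiv_clm_apply hc (differentiableAt_const v)]
  simp

lemma hess_eq_aux {d : ℕ} (f : Ed d → ℝ) (hf : ContDiff ℝ (⊤ : ℕ∞) f) (q u v : Ed d) :
    Hess f q u v = fderiv ℝ (fderiv ℝ f) q u v := by
  have hd1 : ContDiff ℝ (⊤ : ℕ∞) (fderiv ℝ f) := hf.fderiv_right (by simp)
  rw [Hess, fderiv_apply_const_aux v (hd1.differentiable (by simp) q)]
  rfl

lemma ftest_eq_aux {d : ℕ} (f : Ed d → ℝ) (hf : ContDiff ℝ (⊤ : ℕ∞) f) (ε : ℝ) (q p : Ed d) :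
    ftest ε f q p = f q + ε * fderiv ℝ f q p + ε ^ 2 / 2 * fderiv ℝ (fderiv ℝ f) q p p := by
  rw [ftest, inner_grad_aux, hess_eq_aux f hf]

lemma hasFDerivAt_ftest_p_aux {d : ℕ} (f : Ed d → ℝ) (hf : ContDiff ℝ (⊤ : ℕ∞) f) (ε : ℝ) (q x : Ed d) :
    HasFDerivAt (ftest ε f q)
      (ε • fderiv ℝ f q +
        (ε ^ 2 / 2) • ((fderiv ℝ (fderiv ℝ f) q x) + (fderiv ℝ (fderiv ℝ f) q).flip x)) x := by
  have hfun : ftest ε f q = fun p => f q + ε * fderiv ℝ f q p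
      + ε ^ 2 / 2 * fderiv ℝ (fderiv ℝ f) q p p := funext fun p => ftest_eq_aux f hf ε q p
  rw [hfun]
  set D2 := fderiv ℝ (fderiv ℝ f) with hD2
  have h1 : HasFDerivAt (fun p : Ed d => ε * fderiv ℝ f q p) (ε • fderiv ℝ f q) x :=
    ((fderiv ℝ f q).hasFDerivAt).const_mul ε
  have h2 : HasFDerivAt (fun p : Ed d => D2 q p p) (D2 q x + (D2 q).flip x) x := by
    have h := HasFDerivAt.clm_apply (c := fun p : Ed d => D2 q p) (c' := D2 q)
      (u := id) (u' := ContinuousLinearMap.id ℝ (Ed d))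
      ((D2 q).hasFDerivAt (x := x)) (hasFDerivAt_id x)
    have he : (D2 q x).comp (ContinuousLinearMap.id ℝ (Ed d)) + (D2 q).flip (id x)
        = D2 q x + (D2 q).flip x := by ext v; simp
    rw [he] at h
    exact h
  have h3 := h2.const_mul (ε ^ 2 / 2)
  have h4 := ((hasFDerivAt_const (f q) x).add h1).add h3
  have he2 : (0 : Ed d →L[ℝ] ℝ) + ε • fderiv ℝ f q + (ε ^ 2 / 2) • (D2 q x + (D2 q).flip x)
      = ε • fderiv ℝ f q + (ε ^ 2 / 2) • (D2 q x + (D2 q).flip x) := by rw [zero_add]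
  rw [he2] at h4
  exact h4

lemma fderiv_ftest_p_apply_aux {d : ℕ} (f : Ed d → ℝ) (hf : ContDiff ℝ (⊤ : ℕ∞) f) (ε : ℝ) (q x v : Ed d) :
    fderiv ℝ (ftest ε f q) x v
      = ε * fderiv ℝ f q v
        + ε ^ 2 / 2 * (fderiv ℝ (fderiv ℝ f) q x v + fderiv ℝ (fderiv ℝ f) q v x) := by
  rw [(hasFDerivAt_ftest_p_aux f hf ε q x).fderiv]
  simp [mul_add]

lemma lapl_f_eq_aux {d : ℕ} (f : Ed d → ℝ) (hf : ContDiff ℝ (⊤ : ℕ∞) f) (q : Ed d) :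
    lapl f q = ∑ i : Fin d,
      fderiv ℝ (fderiv ℝ f) q (EuclideanSpace.single i (1:ℝ)) (EuclideanSpace.single i (1:ℝ)) := by
  have hd1 : ContDiff ℝ (⊤ : ℕ∞) (fderiv ℝ f) := hf.fderiv_right (by simp)
  unfold lapl
  refine Finset.sum_congr rfl fun i _ => ?_
  rw [fderiv_apply_const_aux _ (hd1.differentiable (by simp) q)]
  rfl

lemma lapl_ftest_aux {d : ℕ} (f : Ed d → ℝ) (hf : ContDiff ℝ (⊤ : ℕ∞) f) (ε : ℝ) (q p : Ed d) :
    lapl (ftest ε f q) p = ε ^ 2 * lapl f q := by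
  set D2 := fderiv ℝ (fderiv ℝ f) with hD2
  rw [lapl_f_eq_aux f hf q, lapl, Finset.mul_sum]
  refine Finset.sum_congr rfl fun i _ => ?_
  set e := EuclideanSpace.single i (1:ℝ)
  have hfun : (fun x => fderiv ℝ (ftest ε f q) x e)
      = fun x => ε * fderiv ℝ f q e + ε ^ 2 / 2 * (D2 q x e + D2 q e x) :=
    funext fun x => fderiv_ftest_p_apply_aux f hf ε q x e
  rw [hfun]
  have h1 : HasFDerivAt (fun x : Ed d => D2 q x e + D2 q e x) ((D2 q).flip e + D2 q e) p :=
    ((D2 q).flip e).hasFDerivAt.add ((D2 q e).hasFDerivAt)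
  have h2 := (h1.const_mul (ε ^ 2 / 2)).const_add (ε * fderiv ℝ f q e)
  rw [h2.fderiv]
  simp
  ring

lemma fderiv_ftest_q_apply_aux {d : ℕ} (f : Ed d → ℝ) (hf : ContDiff ℝ (⊤ : ℕ∞) f) (ε : ℝ) (q p : Ed d) :
    fderiv ℝ (fun q' => ftest ε f q' p) q p
      = fderiv ℝ f q p + ε * fderiv ℝ (fderiv ℝ f) q p p
        + ε ^ 2 / 2 * fderiv ℝ (fderiv ℝ (fderiv ℝ f)) q p p p := by
  set D1 := fderiv ℝ f with hD1
  set D2 := fderiv ℝ D1 with hD2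
  set D3 := fderiv ℝ D2 with hD3
  have hd1 : ContDiff ℝ (⊤ : ℕ∞) D1 := hf.fderiv_right (by simp)
  have hd2 : ContDiff ℝ (⊤ : ℕ∞) D2 := hd1.fderiv_right (by simp)
  have hfun : (fun q' => ftest ε f q' p)
      = fun q' => f q' + ε * D1 q' p + ε ^ 2 / 2 * D2 q' p p :=
    funext fun q' => ftest_eq_aux f hf ε q' p
  rw [hfun]
  have hff : HasFDerivAt f (D1 q) q := (hf.differentiable (by simp) q).hasFDerivAt
  have hc1 : HasFDerivAt (fun q' : Ed d => D1 q' p) ((D2 q).flip p) q := by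
    have h := HasFDerivAt.clm_apply (c := D1) (c' := D2 q)
      (u := fun _ => p) (u' := 0)
      ((hd1.differentiable (by simp) q).hasFDerivAt) (hasFDerivAt_const p q)
    have he : (D1 q).comp (0 : Ed d →L[ℝ] Ed d) + (D2 q).flip p = (D2 q).flip p := by
      ext v; simp
    rwa [he] at h
  have hc : HasFDerivAt (fun q' : Ed d => D2 q' p) ((D3 q).flip p) q := by
    have h := HasFDerivAt.clm_apply (c := D2) (c' := D3 q)
      (u := fun _ => p) (u' := 0)
      ((hd2.differentiable (by simp) q).hasFDerivAt) (hasFDerivAt_const p q)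
    have he : (D2 q).comp (0 : Ed d →L[ℝ] Ed d) + (D3 q).flip p = (D3 q).flip p := by
      ext v; simp
    rwa [he] at h
  have hc2 : HasFDerivAt (fun q' : Ed d => D2 q' p p) (((D3 q).flip p).flip p) q := by
    have h := HasFDerivAt.clm_apply (c := fun q' : Ed d => D2 q' p) (c' := (D3 q).flip p)
      (u := fun _ => p) (u' := 0) hc (hasFDerivAt_const p q)
    have he : (D2 q p).comp (0 : Ed d →L[ℝ] Ed d) + ((D3 q).flip p).flip p
        = ((D3 q).flip p).flip p := by ext v; simp
    rwa [he] at h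
  have h4 := (hff.add (hc1.const_mul ε)).add (hc2.const_mul (ε ^ 2 / 2))
  rw [HasFDerivAt.fderiv (f := fun q' => f q' + ε * D1 q' p + ε ^ 2 / 2 * D2 q' p p) h4]
  simp

set_option maxHeartbeats 1000000 in
set_option synthInstance.maxHeartbeats 200000 in
theorem generator_error_bound {d : ℕ} (β ε : ℝ) (hβ : 0 < β) (hε : 0 < ε)
    (f V Vε : Ed d → ℝ) (hf : ContDiff ℝ (⊤ : ℕ∞) f)
    (hV : ContDiff ℝ 1 V) (hVε : ContDiff ℝ 1 Vε)
    (hperf : ZdPeriodic f) (hperV : ZdPeriodic V) (hperVε : ZdPeriodic Vε)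
    (Cf : ℝ)
    (hCf : Cf = max (⨆ q : Ed d, ‖gradient f q‖)
        (max (⨆ q : Ed d, ‖iteratedFDeriv ℝ 2 f q‖) (⨆ q : Ed d, ‖iteratedFDeriv ℝ 3 f q‖))) :
    ∀ q p : Ed d,
      |Leps ε β Vε (ftest ε f) q p - Lov β V f q|
        ≤ Cf * (⨆ q' : Ed d, ‖gradient V q' - gradient Vε q'‖)
          + ε * Cf * (2 * ‖p‖ ^ 3 + (⨆ q' : Ed d, ‖gradient Vε q'‖) ^ ((3 : ℝ) / 2)) := by
  intro q p
  have hd1 : ContDiff ℝ (⊤ : ℕ∞) (fderiv ℝ f) := hf.fderiv_right (by simp)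
  have hd2 : ContDiff ℝ (⊤ : ℕ∞) (fderiv ℝ (fderiv ℝ f)) := hd1.fderiv_right (by simp)
  have hd3 : ContDiff ℝ (⊤ : ℕ∞) (fderiv ℝ (fderiv ℝ (fderiv ℝ f))) := hd2.fderiv_right (by simp)
  have hperD1 : ∀ (x : Ed d) (m : Fin d → ℤ),
      fderiv ℝ f (x + (EuclideanSpace.equiv (Fin d) ℝ).symm (fun i => (m i : ℝ))) =
        fderiv ℝ f x :=
    fun x m => fderiv_shift_aux (hf.differentiable (by simp)) (fun y => hperf y m) x
  have hperD2 : ∀ (x : Ed d) (m : Fin d → ℤ),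
      fderiv ℝ (fderiv ℝ f) (x + (EuclideanSpace.equiv (Fin d) ℝ).symm (fun i => (m i : ℝ))) =
        fderiv ℝ (fderiv ℝ f) x :=
    fun x m => fderiv_shift_aux (hd1.differentiable (by simp)) (fun y => hperD1 y m) x
  have hperD3 : ∀ (x : Ed d) (m : Fin d → ℤ),
      fderiv ℝ (fderiv ℝ (fderiv ℝ f))
          (x + (EuclideanSpace.equiv (Fin d) ℝ).symm (fun i => (m i : ℝ))) =
        fderiv ℝ (fderiv ℝ (fderiv ℝ f)) x :=
    fun x m => fderiv_shift_aux (hd2.differentiable (by simp)) (fun y => hperD2 y m) x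
  have hperDV : ∀ (x : Ed d) (m : Fin d → ℤ),
      fderiv ℝ V (x + (EuclideanSpace.equiv (Fin d) ℝ).symm (fun i => (m i : ℝ))) =
        fderiv ℝ V x :=
    fun x m => fderiv_shift_aux (hV.differentiable (by simp)) (fun y => hperV y m) x
  have hperDVε : ∀ (x : Ed d) (m : Fin d → ℤ),
      fderiv ℝ Vε (x + (EuclideanSpace.equiv (Fin d) ℝ).symm (fun i => (m i : ℝ))) =
        fderiv ℝ Vε x :=
    fun x m => fderiv_shift_aux (hVε.differentiable (by simp)) (fun y => hperVε y m) x
  have hbdd_gf : BddAbove (Set.range fun x => ‖gradient f x‖) := by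
    apply bdd_of_periodic_aux (fun x => gradient f x)
    · exact ((InnerProductSpace.toDual ℝ (Ed d)).symm.continuous).comp hd1.continuous
    · intro x m
      rw [gradient_def_aux, gradient_def_aux, hperD1 x m]
  have hbdd_D2 : BddAbove (Set.range fun x => ‖fderiv ℝ (fderiv ℝ f) x‖) :=
    bdd_of_periodic_aux _ hd2.continuous hperD2
  have hbdd_D3 : BddAbove (Set.range fun x => ‖fderiv ℝ (fderiv ℝ (fderiv ℝ f)) x‖) :=
    bdd_of_periodic_aux _ hd3.continuous hperD3
  have hbdd_Δ : BddAbove (Set.range fun x => ‖gradient V x - gradient Vε x‖) := by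
    apply bdd_of_periodic_aux (fun x => gradient V x - gradient Vε x)
    · exact (((InnerProductSpace.toDual ℝ (Ed d)).symm.continuous).comp
        (hV.continuous_fderiv (by simp))).sub
        (((InnerProductSpace.toDual ℝ (Ed d)).symm.continuous).comp
          (hVε.continuous_fderiv (by simp)))
    · intro x m
      rw [gradient_def_aux, gradient_def_aux, gradient_def_aux V x, gradient_def_aux Vε x,
        hperDV x m, hperDVε x m]
  have hbdd_Vε : BddAbove (Set.range fun x => ‖gradient Vε x‖) := by
    apply bdd_of_periodic_aux (fun x => gradient Vε x)
    · exact ((InnerProductSpace.toDual ℝ (Ed d)).symm.continuous).comp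
        (hVε.continuous_fderiv (by simp))
    · intro x m
      rw [gradient_def_aux, gradient_def_aux, hperDVε x m]
  have hn2 : ∀ x : Ed d, ‖fderiv ℝ (fderiv ℝ f) x‖ = ‖iteratedFDeriv ℝ 2 f x‖ := by
    intro x
    calc ‖fderiv ℝ (fderiv ℝ f) x‖ = ‖iteratedFDeriv ℝ 0 (fderiv ℝ (fderiv ℝ f)) x‖ :=
          (norm_iteratedFDeriv_zero (𝕜 := ℝ) (f := fderiv ℝ (fderiv ℝ f)) (x := x)).symm
      _ = ‖iteratedFDeriv ℝ (0 + 1) (fderiv ℝ f) x‖ := norm_iteratedFDeriv_fderiv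
      _ = ‖iteratedFDeriv ℝ (0 + 1 + 1) f x‖ := norm_iteratedFDeriv_fderiv
      _ = ‖iteratedFDeriv ℝ 2 f x‖ := by norm_num
  have hn3 : ∀ x : Ed d, ‖fderiv ℝ (fderiv ℝ (fderiv ℝ f)) x‖ = ‖iteratedFDeriv ℝ 3 f x‖ := by
    intro x
    calc ‖fderiv ℝ (fderiv ℝ (fderiv ℝ f)) x‖
        = ‖iteratedFDeriv ℝ 0 (fderiv ℝ (fderiv ℝ (fderiv ℝ f))) x‖ :=
          (norm_iteratedFDeriv_zero (𝕜 := ℝ) (f := fderiv ℝ (fderiv ℝ (fderiv ℝ f))) (x := x)).symm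
      _ = ‖iteratedFDeriv ℝ (0 + 1) (fderiv ℝ (fderiv ℝ f)) x‖ :=
        norm_iteratedFDeriv_fderiv (𝕜 := ℝ) (f := fderiv ℝ (fderiv ℝ f)) (n := 0) (x := x)
      _ = ‖iteratedFDeriv ℝ (0 + 1 + 1) (fderiv ℝ f) x‖ := norm_iteratedFDeriv_fderiv
      _ = ‖iteratedFDeriv ℝ (0 + 1 + 1 + 1) f x‖ := norm_iteratedFDeriv_fderiv
      _ = ‖iteratedFDeriv ℝ 3 f x‖ := by norm_num
  have hbdd_i2 : BddAbove (Set.range fun x : Ed d => ‖iteratedFDeriv ℝ 2 f x‖) := by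
    have he : (fun x : Ed d => ‖iteratedFDeriv ℝ 2 f x‖)
        = fun x => ‖fderiv ℝ (fderiv ℝ f) x‖ := funext fun x => (hn2 x).symm
    rw [he]; exact hbdd_D2
  have hbdd_i3 : BddAbove (Set.range fun x : Ed d => ‖iteratedFDeriv ℝ 3 f x‖) := by
    have he : (fun x : Ed d => ‖iteratedFDeriv ℝ 3 f x‖)
        = fun x => ‖fderiv ℝ (fderiv ℝ (fderiv ℝ f)) x‖ := funext fun x => (hn3 x).symm
    rw [he]; exact hbdd_D3
  have hCf1 : ‖fderiv ℝ f q‖ ≤ Cf := by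
    rw [hCf]
    calc ‖fderiv ℝ f q‖ = ‖gradient f q‖ := (LinearIsometryEquiv.norm_map _ _).symm
      _ ≤ ⨆ x : Ed d, ‖gradient f x‖ := le_ciSup hbdd_gf q
      _ ≤ _ := le_max_left _ _
  have hCf2 : ‖fderiv ℝ (fderiv ℝ f) q‖ ≤ Cf := by
    rw [hCf]
    calc ‖fderiv ℝ (fderiv ℝ f) q‖ = ‖iteratedFDeriv ℝ 2 f q‖ := hn2 q
      _ ≤ ⨆ x : Ed d, ‖iteratedFDeriv ℝ 2 f x‖ := le_ciSup hbdd_i2 q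
      _ ≤ _ := le_trans (le_max_left _ _) (le_max_right _ _)
  have hCf3 : ‖fderiv ℝ (fderiv ℝ (fderiv ℝ f)) q‖ ≤ Cf := by
    rw [hCf]
    calc ‖fderiv ℝ (fderiv ℝ (fderiv ℝ f)) q‖ = ‖iteratedFDeriv ℝ 3 f q‖ := hn3 q
      _ ≤ ⨆ x : Ed d, ‖iteratedFDeriv ℝ 3 f x‖ := le_ciSup hbdd_i3 q
      _ ≤ _ := le_trans (le_max_right _ _) (le_max_right _ _)
  have hCfnn : 0 ≤ Cf := le_trans (norm_nonneg _) hCf1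
  set SΔ := ⨆ q' : Ed d, ‖gradient V q' - gradient Vε q'‖ with hSΔ
  set S := ⨆ q' : Ed d, ‖gradient Vε q'‖ with hS
  have huSΔ : ‖gradient V q - gradient Vε q‖ ≤ SΔ := le_ciSup hbdd_Δ q
  have hwS : ‖gradient Vε q‖ ≤ S := le_ciSup hbdd_Vε q
  have hSnn : 0 ≤ S := Real.iSup_nonneg fun _ => norm_nonneg _
  have hkey : Leps ε β Vε (ftest ε f) q p - Lov β V f q
      = fderiv ℝ f q (gradient V q - gradient Vε q)
        + ε / 2 * fderiv ℝ (fderiv ℝ (fderiv ℝ f)) q p p p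
        - ε / 2 * (fderiv ℝ (fderiv ℝ f) q p (gradient Vε q)
            + fderiv ℝ (fderiv ℝ f) q (gradient Vε q) p) := by
    simp only [Leps, Lov]
    rw [lapl_ftest_aux f hf ε q p, inner_grad_aux, inner_grad_aux, inner_grad_aux,
      inner_grad_aux, fderiv_ftest_p_apply_aux f hf, fderiv_ftest_p_apply_aux f hf,
      fderiv_ftest_q_apply_aux f hf, map_sub]
    field_simp
    ring
  rw [hkey]
  have hp := norm_nonneg p
  have hwn := norm_nonneg (gradient Vε q)
  have hA : |fderiv ℝ f q (gradient V q - gradient Vε q)| ≤ Cf * SΔ := by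
    have h1 := (fderiv ℝ f q).le_opNorm (gradient V q - gradient Vε q)
    rw [Real.norm_eq_abs] at h1
    exact le_trans h1 (mul_le_mul hCf1 huSΔ (norm_nonneg _) hCfnn)
  have hT : |fderiv ℝ (fderiv ℝ (fderiv ℝ f)) q p p p| ≤ Cf * ‖p‖ ^ 3 := by
    have h1 := (fderiv ℝ (fderiv ℝ (fderiv ℝ f)) q p p).le_opNorm p
    have h2 := (fderiv ℝ (fderiv ℝ (fderiv ℝ f)) q p).le_opNorm p
    have h3 := ContinuousLinearMap.le_opNorm (𝕜 := ℝ) (𝕜₂ := ℝ) (E := Ed d)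
      (F := Ed d →L[ℝ] Ed d →L[ℝ] ℝ) (σ₁₂ := RingHom.id ℝ) (fderiv ℝ (fderiv ℝ (fderiv ℝ f)) q) p
    rw [Real.norm_eq_abs] at h1
    calc |fderiv ℝ (fderiv ℝ (fderiv ℝ f)) q p p p|
        ≤ ‖fderiv ℝ (fderiv ℝ (fderiv ℝ f)) q p p‖ * ‖p‖ := h1
      _ ≤ (‖fderiv ℝ (fderiv ℝ (fderiv ℝ f)) q p‖ * ‖p‖) * ‖p‖ :=
          mul_le_mul_of_nonneg_right h2 hp
      _ ≤ ((‖fderiv ℝ (fderiv ℝ (fderiv ℝ f)) q‖ * ‖p‖) * ‖p‖) * ‖p‖ :=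
          mul_le_mul_of_nonneg_right (mul_le_mul_of_nonneg_right h3 hp) hp
      _ = ‖fderiv ℝ (fderiv ℝ (fderiv ℝ f)) q‖ * ‖p‖ ^ 3 := by ring
      _ ≤ Cf * ‖p‖ ^ 3 := mul_le_mul_of_nonneg_right hCf3 (pow_nonneg hp 3)
  have hB1 : ∀ u v : Ed d, |fderiv ℝ (fderiv ℝ f) q u v|
      ≤ ‖fderiv ℝ (fderiv ℝ f) q‖ * ‖u‖ * ‖v‖ := by
    intro u v
    have h1 := (fderiv ℝ (fderiv ℝ f) q u).le_opNorm v
    have h2 := (fderiv ℝ (fderiv ℝ f) q).le_opNorm u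
    rw [Real.norm_eq_abs] at h1
    exact le_trans h1 (mul_le_mul_of_nonneg_right h2 (norm_nonneg v))
  have hB : |fderiv ℝ (fderiv ℝ f) q p (gradient Vε q)
      + fderiv ℝ (fderiv ℝ f) q (gradient Vε q) p| ≤ 2 * (Cf * (‖p‖ * S)) := by
    have hb1 := hB1 p (gradient Vε q)
    have hb2 := hB1 (gradient Vε q) p
    have hprod : ‖fderiv ℝ (fderiv ℝ f) q‖ * ‖p‖ * ‖gradient Vε q‖ ≤ Cf * (‖p‖ * S) := by
      have h5 : ‖p‖ * ‖gradient Vε q‖ ≤ ‖p‖ * S := mul_le_mul_of_nonneg_left hwS hp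
      calc ‖fderiv ℝ (fderiv ℝ f) q‖ * ‖p‖ * ‖gradient Vε q‖
          = ‖fderiv ℝ (fderiv ℝ f) q‖ * (‖p‖ * ‖gradient Vε q‖) := by ring
        _ ≤ Cf * (‖p‖ * S) := mul_le_mul hCf2 h5 (mul_nonneg hp hwn) hCfnn
    have habs := abs_add_le (fderiv ℝ (fderiv ℝ f) q p (gradient Vε q))
      (fderiv ℝ (fderiv ℝ f) q (gradient Vε q) p)
    have hb2' : |fderiv ℝ (fderiv ℝ f) q (gradient Vε q) p| ≤ Cf * (‖p‖ * S) := by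
      refine le_trans hb2 ?_
      calc ‖fderiv ℝ (fderiv ℝ f) q‖ * ‖gradient Vε q‖ * ‖p‖
          = ‖fderiv ℝ (fderiv ℝ f) q‖ * ‖p‖ * ‖gradient Vε q‖ := by ring
        _ ≤ Cf * (‖p‖ * S) := hprod
    have hb1' : |fderiv ℝ (fderiv ℝ f) q p (gradient Vε q)| ≤ Cf * (‖p‖ * S) :=
      le_trans hb1 hprod
    linarith
  have hε2 : (0:ℝ) < ε / 2 := by linarith
  have htri : |fderiv ℝ f q (gradient V q - gradient Vε q)
        + ε / 2 * fderiv ℝ (fderiv ℝ (fderiv ℝ f)) q p p p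
        - ε / 2 * (fderiv ℝ (fderiv ℝ f) q p (gradient Vε q)
            + fderiv ℝ (fderiv ℝ f) q (gradient Vε q) p)|
      ≤ |fderiv ℝ f q (gradient V q - gradient Vε q)|
        + ε / 2 * |fderiv ℝ (fderiv ℝ (fderiv ℝ f)) q p p p|
        + ε / 2 * |fderiv ℝ (fderiv ℝ f) q p (gradient Vε q)
            + fderiv ℝ (fderiv ℝ f) q (gradient Vε q) p| := by
    have h := abs_add_three (fderiv ℝ f q (gradient V q - gradient Vε q))
      (ε / 2 * fderiv ℝ (fderiv ℝ (fderiv ℝ f)) q p p p)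
      (-(ε / 2 * (fderiv ℝ (fderiv ℝ f) q p (gradient Vε q)
          + fderiv ℝ (fderiv ℝ f) q (gradient Vε q) p)))
    rw [abs_neg, abs_mul, abs_mul, abs_of_pos hε2, ← sub_eq_add_neg] at h
    exact h
  have hcube : Cf * (‖p‖ * S) ≤ Cf * (‖p‖ ^ 3 + S ^ ((3:ℝ)/2)) :=
    mul_le_mul_of_nonneg_left (mul_le_cube_add_aux _ _ hp hSnn) hCfnn
  have e2 := mul_le_mul_of_nonneg_left hT (le_of_lt hε2)
  have e3 := mul_le_mul_of_nonneg_left hB (le_of_lt hε2)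
  have e4 := mul_le_mul_of_nonneg_left hcube (le_of_lt hε)
  have h5 : (0:ℝ) ≤ ε * (Cf * ‖p‖ ^ 3) :=
    mul_nonneg (le_of_lt hε) (mul_nonneg hCfnn (pow_nonneg hp 3))
  nlinarith [htri, hA, e2, e3, e4, h5]
end

section
/- Let (Ω, ℱ, P) be a probability space, (ℱ_t) a filtration, and (M_t)_{t≥0}, (X_t)_{t≥0} càdlàg real- and E-valued adapted processes respectively, with M integrable at every time. Suppose 𝒞 ⊆ [0,∞) is dense and E[(M_{t_{k+1}} − M_{t_k})·φ_k(X_{t_k})⋯φ_1(X_{t_1})] = 0 for all finite ladders t₁ ≤ ⋯ ≤ t_{k+1} in 𝒞 and all bounded continuous φ₁,…,φ_k : E → ℝ. Then (M_t) is a martingale with respect to the natural filtration of X. -/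
/-
On times `s ≤ u` in `𝒞` the ladder condition says that `M u - M s` is orthogonal to every product
`∏ φᵢ(X tᵢ)` with inner times in `𝒞 ∩ (-∞, s]`. Right continuity of `X` and dominated
convergence move the inner times to all of `[0, s]`; approximating indicators of closed sets by
bounded continuous functions and a π-λ argument then give `∫_A (M u - M s) = 0` for all
`A ∈ ℱ^X_s`, i.e. `M` is a martingale along `𝒞`. For arbitrary `r ≤ U ∈ 𝒞`, approximate `r`
from the right by `cₙ ∈ 𝒞`: the variables `M cₙ = E[M U | ℱ^X_{cₙ}]` are uniformly integrable
and converge pointwise to `M r` by right continuity of `M`, hence in `L¹`, so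
`E[M U | ℱ^X_r] = M r`. The tower property concludes.
-/

open MeasureTheory Filter

/-- The natural filtration `ℱ^X_t = σ(X_s, 0 ≤ s ≤ t)` of an `E`-valued process. -/
def natFiltration {Ω E : Type*} [MeasurableSpace E] (X : ℝ → Ω → E) (t : ℝ) :
    MeasurableSpace Ω :=
  ⨆ s ∈ Set.Icc (0 : ℝ) t, MeasurableSpace.comap (X s) inferInstance

open Set Topology MeasurableSpace

lemma exists_mem_gt_of_Ici_subset_closure {𝒞 : Set ℝ} (h𝒞 : Ici 0 ⊆ closure 𝒞) {t : ℝ}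
    (ht : 0 ≤ t) : ∃ u ∈ 𝒞, t < u := by
  have hclosure : (closure 𝒞 ∩ Ioi t).Nonempty :=
    ⟨t + 1, h𝒞 (mem_Ici.2 (by linarith)), mem_Ioi.2 (by linarith)⟩
  obtain ⟨u, hu, htu⟩ := (closure_inter_open_nonempty_iff isOpen_Ioi).1 hclosure
  exact ⟨u, hu, htu⟩

lemma exists_seq_tendsto_nhdsWithin_Ici_of_Ici_subset_closure {𝒞 : Set ℝ}
    (h𝒞 : Ici 0 ⊆ closure 𝒞) {t s : ℝ} (ht : 0 ≤ t) (hts : t ≤ s) (hs : s ∈ 𝒞) :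
    ∃ c : ℕ → ℝ, (∀ n, c n ∈ 𝒞 ∩ Icc t s) ∧ Tendsto c atTop (𝓝[≥] t) := by
  have hmem : t ∈ closure (𝒞 ∩ Icc t s) := by
    rcases hts.eq_or_lt with rfl | hlt
    · exact subset_closure ⟨hs, left_mem_Icc.2 le_rfl⟩
    · have hIoo : Ioo t s ⊆ closure (Ioo t s ∩ 𝒞) := fun x hx =>
        isOpen_Ioo.inter_closure ⟨hx, h𝒞 (ht.trans hx.1.le)⟩
      have ht' : t ∈ closure (Ioo t s) := by rw [closure_Ioo hlt.ne]; exact left_mem_Icc.2 hts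
      have hsub : closure (Ioo t s ∩ 𝒞) ⊆ closure (𝒞 ∩ Icc t s) :=
        closure_mono fun x hx => ⟨hx.2, Ioo_subset_Icc_self hx.1⟩
      exact hsub (by simpa only [closure_closure] using closure_mono hIoo ht')
  obtain ⟨c, hc, hlim⟩ := mem_closure_iff_seq_limit.1 hmem
  exact ⟨c, hc, tendsto_nhdsWithin_iff.2 ⟨hlim, Eventually.of_forall fun n => (hc n).2.1⟩⟩

section Integrals

variable {Ω : Type*} {m₀ : MeasurableSpace Ω} {μ : Measure Ω}

lemma integral_mul_eq_zero_of_tendsto {D : Ω → ℝ} (hD : Integrable D μ) {g : ℕ → Ω → ℝ}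
    {g' : Ω → ℝ} (hg : ∀ n, AEStronglyMeasurable (g n) μ) {C : ℝ} (hC : ∀ n ω, |g n ω| ≤ C)
    (hlim : ∀ ω, Tendsto (fun n => g n ω) atTop (𝓝 (g' ω)))
    (hzero : ∀ n, ∫ ω, D ω * g n ω ∂μ = 0) : ∫ ω, D ω * g' ω ∂μ = 0 := by
  have h := tendsto_integral_of_dominated_convergence (fun ω => |D ω| * C)
    (fun n => hD.1.mul (hg n)) (hD.abs.mul_const C)
    (fun n => Eventually.of_forall fun ω => by
      rw [Real.norm_eq_abs, Pi.mul_apply, abs_mul]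
      exact mul_le_mul_of_nonneg_left (hC n ω) (abs_nonneg _))
    (Eventually.of_forall fun ω => (hlim ω).const_mul (D ω))
  simp only [Pi.mul_apply, hzero] at h
  exact tendsto_nhds_unique h tendsto_const_nhds

lemma setIntegral_eq_zero_of_isPiSystem {G : Type*} [NormedAddCommGroup G] [NormedSpace ℝ G]
    {m : MeasurableSpace Ω} (hm : m ≤ m₀) {f : Ω → G}
    (hf : Integrable f μ) {S : Set (Set Ω)} (hgen : m = generateFrom S) (hS : IsPiSystem S)
    (huniv : ∫ ω, f ω ∂μ = 0) (hSf : ∀ A ∈ S, ∫ ω in A, f ω ∂μ = 0) {A : Set Ω}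
    (hA : MeasurableSet[m] A) : ∫ ω in A, f ω ∂μ = 0 := by
  induction A, hA using induction_on_inter hgen hS with
  | empty => simp
  | basic A hA => exact hSf A hA
  | compl A hA ih => rw [setIntegral_compl (hm A hA) hf, huniv, ih, sub_zero]
  | iUnion A hdisj hA ih =>
    rw [integral_iUnion (fun n => hm _ (hA n)) hdisj hf.integrableOn]
    simp [ih]

lemma condExp_ae_eq_of_tendsto_condExp [IsFiniteMeasure μ] {m : ℕ → MeasurableSpace Ω}
    {m' : MeasurableSpace Ω} (hm : ∀ n, m n ≤ m₀) (hm' : ∀ n, m' ≤ m n) {f g : Ω → ℝ}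
    (hf : Integrable f μ) (hg : Integrable g μ) (hgm : StronglyMeasurable[m'] g)
    (hlim : ∀ᵐ ω ∂μ, Tendsto (fun n => μ[f|m n] ω) atTop (𝓝 (g ω))) :
    μ[f|m'] =ᵐ[μ] g := by
  refine (ae_eq_condExp_of_forall_setIntegral_eq ((hm' 0).trans (hm 0)) hf
    (fun _ _ _ => hg.integrableOn) (fun A hA _ => ?_) hgm.aestronglyMeasurable).symm
  have hL1 : Tendsto (fun n => eLpNorm (μ[f|m n] - g) 1 μ) atTop (𝓝 0) :=
    tendsto_Lp_finite_of_tendsto_ae le_rfl ENNReal.one_ne_top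
      (fun n => (stronglyMeasurable_condExp.mono (hm n)).aestronglyMeasurable)
      (memLp_one_iff_integrable.2 hg) (hf.uniformIntegrable_condExp hm).2.1 hlim
  have hA_int := tendsto_setIntegral_of_L1' g hg.1
    (Eventually.of_forall fun _ => integrable_condExp) hL1 A
  simp only [setIntegral_condExp (hm _) hf (hm' _ A hA)] at hA_int
  exact tendsto_nhds_unique hA_int tendsto_const_nhds

end Integrals

section Products

variable {Ω E ι : Type*} {m₀ : MeasurableSpace Ω} {μ : Measure Ω}

def boundedContinuous (E : Type*) [TopologicalSpace E] : Set (E → ℝ) :=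
  {φ | Continuous φ ∧ ∃ C, ∀ x, |φ x| ≤ C}

def closedIndicators (E : Type*) [TopologicalSpace E] : Set (E → ℝ) :=
  {φ | ∃ F, IsClosed F ∧ φ = F.indicator 1}

def OrthogonalToProducts (μ : Measure Ω) (D : Ω → ℝ) (X : ℝ → Ω → E) (T : Set ℝ)
    (Φ : Set (E → ℝ)) : Prop :=
  ∀ (k : ℕ) (t : Fin k → ℝ) (φ : Fin k → E → ℝ), (∀ i, t i ∈ T) → (∀ i, φ i ∈ Φ) →
    ∫ ω, D ω * ∏ i, φ i (X (t i) ω) ∂μ = 0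

namespace OrthogonalToProducts

variable {D : Ω → ℝ} {X : ℝ → Ω → E} {T : Set ℝ} {Φ : Set (E → ℝ)}

lemma integral_mul_finset_prod (h : OrthogonalToProducts μ D X T Φ) (I : Finset ι)
    (t : ι → ℝ) (φ : ι → E → ℝ) (ht : ∀ i ∈ I, t i ∈ T) (hφ : ∀ i ∈ I, φ i ∈ Φ) :
    ∫ ω, D ω * ∏ i ∈ I, φ i (X (t i) ω) ∂μ = 0 := by
  let e := I.equivFin
  rw [← h I.card (fun j => t (e.symm j)) (fun j => φ (e.symm j))
    (fun j => ht _ (e.symm j).2) (fun j => hφ _ (e.symm j).2)]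
  congr 1 with ω
  rw [← Finset.prod_coe_sort]
  exact congrArg _ (Fintype.prod_equiv e _ _ fun i => by simp [e])

lemma integral_eq_zero (h : OrthogonalToProducts μ D X T Φ) : ∫ ω, D ω ∂μ = 0 := by
  simpa using h 0 Fin.elim0 Fin.elim0 (fun i => i.elim0) (fun i => i.elim0)

variable [TopologicalSpace E] [MeasurableSpace E] [OpensMeasurableSpace E]

lemma of_tendsto_nhdsWithin_Ici (hD : Integrable D μ) (hX : ∀ t, Measurable (X t))
    (hXrc : ∀ ω t, ContinuousWithinAt (fun s => X s ω) (Ici t) t)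
    (h : OrthogonalToProducts μ D X T (boundedContinuous E)) {T' : Set ℝ}
    (hT' : ∀ t ∈ T', ∃ c : ℕ → ℝ, (∀ n, c n ∈ T) ∧ Tendsto c atTop (𝓝[≥] t)) :
    OrthogonalToProducts μ D X T' (boundedContinuous E) := by
  intro k t φ ht hφ
  choose c hcT hc using fun i => hT' (t i) (ht i)
  choose C hC using fun i => (hφ i).2
  refine integral_mul_eq_zero_of_tendsto hD (g := fun n ω => ∏ i, φ i (X (c i n) ω))
    (C := ∏ i, C i) (fun n => ?_) (fun n ω => ?_) (fun ω => ?_)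
    (fun n => h k (fun i => c i n) φ (fun i => hcT i n) hφ)
  · exact (Finset.measurable_prod _ fun i _ =>
      (hφ i).1.measurable.comp (hX _)).aestronglyMeasurable
  · rw [Finset.abs_prod]
    exact Finset.prod_le_prod (fun i _ => abs_nonneg _) fun i _ => hC i _
  · exact tendsto_finsetProd _ fun i _ =>
      ((hφ i).1.tendsto _).comp ((hXrc ω (t i)).tendsto.comp (hc i))

lemma closedIndicators_of_boundedContinuous [HasOuterApproxClosed E] (hD : Integrable D μ)
    (hX : ∀ t, Measurable (X t)) (h : OrthogonalToProducts μ D X T (boundedContinuous E)) :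
    OrthogonalToProducts μ D X T (closedIndicators E) := by
  intro k t φ ht hφ
  choose F hF hφF using hφ
  have happr : ∀ i n, (fun x => ((hF i).apprSeq n x : ℝ)) ∈ boundedContinuous E := fun i n =>
    ⟨NNReal.continuous_coe.comp ((hF i).apprSeq n).continuous, 1, fun x => by
      simpa using HasOuterApproxClosed.apprSeq_apply_le_one (hF i) n x⟩
  refine integral_mul_eq_zero_of_tendsto hD
    (g := fun n ω => ∏ i, ((hF i).apprSeq n (X (t i) ω) : ℝ)) (C := 1) (fun n => ?_)
    (fun n ω => ?_) (fun ω => ?_) (fun n => h k t _ ht fun i => happr i n)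
  · exact (Finset.measurable_prod _ fun i _ =>
      (happr i n).1.measurable.comp (hX _)).aestronglyMeasurable
  · rw [Finset.abs_prod]
    exact Finset.prod_le_one (fun i _ => abs_nonneg _) fun i _ => by
      simpa using HasOuterApproxClosed.apprSeq_apply_le_one (hF i) n _
  · refine tendsto_finsetProd _ fun i _ => ?_
    have h_appr := NNReal.tendsto_coe.2 (tendsto_pi_nhds.1
      (HasOuterApproxClosed.tendsto_apprSeq (hF i)) (X (t i) ω))
    rwa [NNReal.coe_indicator, NNReal.coe_one, ← Pi.one_def, ← hφF i] at h_appr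

end OrthogonalToProducts

lemma iSup_comap_eq_generateFrom_piiUnionInter_isClosed [TopologicalSpace E] [MeasurableSpace E]
    [BorelSpace E] (X : ι → Ω → E) (T : Set ι) :
    ⨆ r ∈ T, MeasurableSpace.comap (X r) ‹MeasurableSpace E›
      = generateFrom (piiUnionInter (fun r => {A | ∃ F, IsClosed F ∧ X r ⁻¹' F = A}) T) := by
  have hcomap : ∀ r, MeasurableSpace.comap (X r) ‹MeasurableSpace E›
      = generateFrom {A | ∃ F, IsClosed F ∧ X r ⁻¹' F = A} := fun r => by
    rw [BorelSpace.measurable_eq (α := E), borel_eq_generateFrom_isClosed, comap_generateFrom]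
    rfl
  refine le_antisymm (iSup₂_le fun r hr => (hcomap r).le.trans
      (le_generateFrom_piiUnionInter (π := fun r => {A | ∃ F, IsClosed F ∧ X r ⁻¹' F = A}) T hr))
    (generateFrom_le fun A hA => measurableSet_iSup_of_mem_piiUnionInter _ T A ?_)
  refine piiUnionInter_mono_left (fun r B hB => ?_) T hA
  obtain ⟨F, hF, rfl⟩ := hB
  exact ⟨F, hF.measurableSet, rfl⟩

lemma OrthogonalToProducts.setIntegral_eq_zero [TopologicalSpace E] [MeasurableSpace E]
    [BorelSpace E] {D : Ω → ℝ} {X : ℝ → Ω → E} {T : Set ℝ} (hD : Integrable D μ)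
    (hX : ∀ t, Measurable (X t)) (h : OrthogonalToProducts μ D X T (closedIndicators E))
    {A : Set Ω}
    (hA : MeasurableSet[⨆ r ∈ T, MeasurableSpace.comap (X r) ‹MeasurableSpace E›] A) :
    ∫ ω in A, D ω ∂μ = 0 := by
  refine setIntegral_eq_zero_of_isPiSystem (iSup₂_le fun r _ => (hX r).comap_le) hD
    (iSup_comap_eq_generateFrom_piiUnionInter_isClosed X T)
    (isPiSystem_piiUnionInter _ (fun r => isPiSystem_isClosed.comap (X r)) T)
    h.integral_eq_zero ?_ hA
  rintro _ ⟨I, hIT, f, hf, rfl⟩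
  choose! F hF hfF using hf
  have hB : MeasurableSet (⋂ r ∈ I, f r) :=
    I.measurableSet_biInter fun r hr => hfF r hr ▸ (hF r hr).measurableSet.preimage (hX r)
  rw [← integral_indicator hB]
  convert h.integral_mul_finset_prod I (fun r => r) (fun r => (F r).indicator 1) hIT
    (fun r hr => ⟨F r, hF r hr, rfl⟩) using 2
  funext ω
  have hpre : ∀ r ∈ I, (F r).indicator 1 (X r ω) = (f r).indicator (1 : Ω → ℝ) ω :=
    fun r hr => by rw [← hfF r hr]; rfl
  rw [Finset.prod_congr rfl hpre, prod_indicator_apply, Finset.prod_const_one,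
    ← indicator_mul_right]
  simp

end Products

section NaturalFiltration

variable {Ω E : Type*} [MeasurableSpace E] {X : ℝ → Ω → E}

lemma natFiltration_mono (X : ℝ → Ω → E) {s t : ℝ} (hst : s ≤ t) :
    natFiltration X s ≤ natFiltration X t :=
  biSup_mono fun _ hr => ⟨hr.1, hr.2.trans hst⟩

variable [MeasurableSpace Ω]

lemma natFiltration_le (hX : ∀ t, Measurable (X t)) (t : ℝ) :
    natFiltration X t ≤ ‹MeasurableSpace Ω› :=
  iSup₂_le fun s _ => (hX s).comap_le

variable [MetricSpace E] [BorelSpace E] {μ : Measure Ω} [IsFiniteMeasure μ]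
  {M : ℝ → Ω → ℝ} {𝒞 : Set ℝ}

lemma condExp_natFiltration_ae_eq_of_mem (hX : ∀ t, Measurable (X t))
    (hMint : ∀ t, Integrable (M t) μ)
    (hMadapted : ∀ t : ℝ, 0 ≤ t → StronglyMeasurable[natFiltration X t] (M t))
    (hXrc : ∀ ω t, ContinuousWithinAt (fun s => X s ω) (Ici t) t)
    (h𝒞dense : Ici 0 ⊆ closure 𝒞)
    (hladder : ∀ s ∈ 𝒞, ∀ u ∈ 𝒞, s ≤ u →
      OrthogonalToProducts μ (fun ω => M u ω - M s ω) X (𝒞 ∩ Iic s) (boundedContinuous E))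
    {s u : ℝ} (hs₀ : 0 ≤ s) (hs : s ∈ 𝒞) (hu : u ∈ 𝒞) (hsu : s ≤ u) :
    μ[M u|natFiltration X s] =ᵐ[μ] M s := by
  have hD : Integrable (fun ω => M u ω - M s ω) μ := (hMint u).sub (hMint s)
  have hpast : OrthogonalToProducts μ (fun ω => M u ω - M s ω) X (Icc 0 s)
      (closedIndicators E) := by
    refine ((hladder s hs u hu hsu).of_tendsto_nhdsWithin_Ici hD hX hXrc fun r hr => ?_)
      |>.closedIndicators_of_boundedContinuous hD hX
    obtain ⟨c, hc, hlim⟩ :=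
      exists_seq_tendsto_nhdsWithin_Ici_of_Ici_subset_closure h𝒞dense hr.1 hr.2 hs
    exact ⟨c, fun n => ⟨(hc n).1, (hc n).2.2⟩, hlim⟩
  refine (ae_eq_condExp_of_forall_setIntegral_eq (natFiltration_le hX s) (hMint u)
    (fun _ _ _ => (hMint s).integrableOn) (fun A hA _ => ?_)
    (hMadapted s hs₀).aestronglyMeasurable).symm
  have hA_zero := hpast.setIntegral_eq_zero hD hX hA
  rw [integral_sub (hMint u).integrableOn (hMint s).integrableOn, sub_eq_zero] at hA_zero
  exact hA_zero.symm

lemma condExp_natFiltration_ae_eq_of_le_mem (hX : ∀ t, Measurable (X t))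
    (hMint : ∀ t, Integrable (M t) μ)
    (hMadapted : ∀ t : ℝ, 0 ≤ t → StronglyMeasurable[natFiltration X t] (M t))
    (hMrc : ∀ ω t, ContinuousWithinAt (fun s => M s ω) (Ici t) t)
    (hXrc : ∀ ω t, ContinuousWithinAt (fun s => X s ω) (Ici t) t)
    (h𝒞dense : Ici 0 ⊆ closure 𝒞)
    (hladder : ∀ s ∈ 𝒞, ∀ u ∈ 𝒞, s ≤ u →
      OrthogonalToProducts μ (fun ω => M u ω - M s ω) X (𝒞 ∩ Iic s) (boundedContinuous E))
    {r u : ℝ} (hr : 0 ≤ r) (hu : u ∈ 𝒞) (hru : r ≤ u) :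
    μ[M u|natFiltration X r] =ᵐ[μ] M r := by
  obtain ⟨c, hc, hlim⟩ := exists_seq_tendsto_nhdsWithin_Ici_of_Ici_subset_closure h𝒞dense hr hru hu
  refine condExp_ae_eq_of_tendsto_condExp (fun n => natFiltration_le hX (c n))
    (fun n => natFiltration_mono X (hc n).2.1) (hMint u) (hMint r) (hMadapted r hr) ?_
  have hmart : ∀ᵐ ω ∂μ, ∀ n, μ[M u|natFiltration X (c n)] ω = M (c n) ω :=
    ae_all_iff.2 fun n => condExp_natFiltration_ae_eq_of_mem hX hMint hMadapted hXrc h𝒞dense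
      hladder (hr.trans (hc n).2.1) (hc n).1 hu (hc n).2.2
  filter_upwards [hmart] with ω hω
  simp only [hω]
  exact (hMrc ω r).tendsto.comp hlim

end NaturalFiltration

theorem martingale_from_dense_ladders_general {Ω E : Type*} [MeasurableSpace Ω]
    [MetricSpace E] [MeasurableSpace E] [BorelSpace E]
    (μ : Measure Ω) [IsProbabilityMeasure μ]
    (M : ℝ → Ω → ℝ) (X : ℝ → Ω → E)
    (hXmeas : ∀ t, Measurable (X t))
    (hMint : ∀ t, Integrable (M t) μ)
    -- `M` is adapted to the natural filtration of `X`: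
    (hMadapted : ∀ t : ℝ, 0 ≤ t → @Measurable Ω ℝ (natFiltration X t) _ (M t))
    -- paths of `M` and `X` are càdlàg (right continuity is what is used):
    (hMrc : ∀ ω, ∀ t : ℝ, ContinuousWithinAt (fun s => M s ω) (Set.Ici t) t)
    (hXrc : ∀ ω, ∀ t : ℝ, ContinuousWithinAt (fun s => X s ω) (Set.Ici t) t)
    -- a dense subset of `[0,∞)`:
    (𝒞 : Set ℝ) (h𝒞dense : Set.Ici (0 : ℝ) ⊆ closure 𝒞)
    -- the ladder condition:
    (hladder : ∀ (k : ℕ) (t : Fin k → ℝ) (s u : ℝ), s ∈ 𝒞 → u ∈ 𝒞 → s ≤ u →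
      (∀ i, t i ∈ 𝒞 ∧ t i ≤ s) →
      ∀ φ : Fin k → E → ℝ, (∀ i, Continuous (φ i) ∧ ∃ C, ∀ x, |φ i x| ≤ C) →
        ∫ ω, (M u ω - M s ω) * ∏ i, φ i (X (t i) ω) ∂μ = 0) :
    -- conclusion: `M` is a martingale for the natural filtration of `X`
    ∀ s t : ℝ, 0 ≤ s → s ≤ t →
      μ[M t|natFiltration X s] =ᵐ[μ] M s := by
  intro s t hs hst
  have hMadapted' : ∀ r : ℝ, 0 ≤ r → StronglyMeasurable[natFiltration X r] (M r) :=
    fun r hr => (hMadapted r hr).stronglyMeasurable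
  have hladder' : ∀ s ∈ 𝒞, ∀ u ∈ 𝒞, s ≤ u →
      OrthogonalToProducts μ (fun ω => M u ω - M s ω) X (𝒞 ∩ Iic s) (boundedContinuous E) :=
    fun s hs u hu hsu k t φ ht hφ => hladder k t s u hs hu hsu ht φ hφ
  have hcond : ∀ r u, 0 ≤ r → u ∈ 𝒞 → r ≤ u → μ[M u|natFiltration X r] =ᵐ[μ] M r :=
    fun r u hr hu hru => condExp_natFiltration_ae_eq_of_le_mem hXmeas hMint hMadapted' hMrc hXrc
      h𝒞dense hladder' hr hu hru
  obtain ⟨u, hu, htu⟩ := exists_mem_gt_of_Ici_subset_closure h𝒞dense (hs.trans hst)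
  calc μ[M t|natFiltration X s]
      =ᵐ[μ] μ[μ[M u|natFiltration X t]|natFiltration X s] :=
        condExp_congr_ae (hcond t u (hs.trans hst) hu htu.le).symm
    _ =ᵐ[μ] μ[M u|natFiltration X s] :=
        condExp_condExp_of_le (natFiltration_mono X hst) (natFiltration_le hXmeas t)
    _ =ᵐ[μ] M s := hcond s u hs hu (hst.trans htu.le)

theorem martingale_from_dense_ladders {Ω E : Type*} [MeasurableSpace Ω]
    [MetricSpace E] [MeasurableSpace E] [BorelSpace E]
    (μ : Measure Ω) [IsProbabilityMeasure μ]
    (M : ℝ → Ω → ℝ) (X : ℝ → Ω → E)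
    (hXmeas : ∀ t, Measurable (X t))
    (hMint : ∀ t, Integrable (M t) μ)
    -- `M` is adapted to the natural filtration of `X`:
    (hMadapted : ∀ t : ℝ, 0 ≤ t → @Measurable Ω ℝ (natFiltration X t) _ (M t))
    -- paths of `M` and `X` are càdlàg (right continuity is what is used):
    (hMrc : ∀ ω, ∀ t : ℝ, ContinuousWithinAt (fun s => M s ω) (Set.Ici t) t)
    (hXrc : ∀ ω, ∀ t : ℝ, ContinuousWithinAt (fun s => X s ω) (Set.Ici t) t)
    -- a dense subset of `[0,∞)`:
    (𝒞 : Set ℝ) (h𝒞 : 𝒞 ⊆ Set.Ici 0) (h𝒞dense : Set.Ici (0 : ℝ) ⊆ closure 𝒞)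
    -- the ladder condition:
    (hladder : ∀ (k : ℕ) (t : Fin k → ℝ) (s u : ℝ), s ∈ 𝒞 → u ∈ 𝒞 → s ≤ u →
      (∀ i, t i ∈ 𝒞 ∧ t i ≤ s) →
      ∀ φ : Fin k → E → ℝ, (∀ i, Continuous (φ i) ∧ ∃ C, ∀ x, |φ i x| ≤ C) →
        ∫ ω, (M u ω - M s ω) * ∏ i, φ i (X (t i) ω) ∂μ = 0) :
    -- conclusion: `M` is a martingale for the natural filtration of `X`
    ∀ s t : ℝ, 0 ≤ s → s ≤ t →
      μ[M t|natFiltration X s] =ᵐ[μ] M s :=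
  martingale_from_dense_ladders_general μ M X hXmeas hMint hMadapted hMrc hXrc 𝒞 h𝒞dense hladder
end
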